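/- Let n, k, r be positive integers with 2k ≤ n. Suppose there exists d : {0,1}^n → ℝ≥0 with E[d] = 1, supported on the Hamming ball B_r of radius r around 0^n, such that (Ad)(x) ≥ (n − 2k + 1)·d(x) for all x ∈ {0,1}^n, where A is the adjacency operator of the Hamming graph. Then every (k−1)-wise independent random variable X on {0,1}^n satisfies H(X) ≥ n − log₂ n − log₂(∑_{i=0}^{r} C(n, i)), where C(n,i) is the binomial coefficient. -/

import Mathlib

/-- `p` is the probability mass function of a `k`-wise independent random variable
taking values in `{0,1}^n`. -/
def KWiseIndep (n k : ℕ) (p : (Fin n → Bool) → ℝ) : Prop :=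
  ∀ S : Finset (Fin n), S.card ≤ k → ∀ a : Fin n → Bool,
    (∑ x ∈ Finset.univ.filter fun x => ∀ i ∈ S, x i = a i, p x) = (1 / 2 : ℝ) ^ S.card

/-- Shannon entropy (base 2) of a pmf on `{0,1}^n`. -/
noncomputable def shannonEntropy {n : ℕ} (p : (Fin n → Bool) → ℝ) : ℝ :=
  -∑ x, p x * Real.logb 2 (p x)

/-- The adjacency operator of the Hamming graph on `{0,1}^n`. -/
def adjOp {n : ℕ} (f : (Fin n → Bool) → ℝ) (x : Fin n → Bool) : ℝ :=
  ∑ y ∈ Finset.univ.filter fun y => hammingDist x y = 1, f y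

/-- Hamming weight of `x ∈ {0,1}^n`. -/
def hWt {n : ℕ} (x : Fin n → Bool) : ℕ := (Finset.univ.filter fun i => x i = true).card

/-!
A Delsarte-type linear programming bound. Put `e = d ⋆ d` and `w = p ⋆ p`. The adjacency operator
commutes with convolution, so `A e ≥ (n - 2k + 1) e` and `G = A e - (n - 2k) e ≥ e ≥ 0`, while the
Walsh transform of `G` is `(2k - 2|S|) d̂(S)²`. Since `p̂(S) = 0` for `0 < |S| < k`, Parseval gives
`2ⁿ ⟨G, w⟩ ≤ 2k (∑ d)²`, and keeping only the term at `0` gives `2ⁿ ‖d‖² ‖p‖² ≤ 2k (∑ d)²`.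
Cauchy–Schwarz on the ball gives `(∑ d)² ≤ |B_r| ‖d‖²`, so the collision probability `‖p‖²` is at
most `n |B_r| / 2ⁿ`, and the Shannon entropy is at least the collision entropy `-log₂ ‖p‖²`.
-/

open Finset

section BooleanCube

variable {ι : Type*}

lemma cube_add_self (x : ι → Bool) : x + x = 0 := funext fun i => BooleanRing.add_self (x i)

lemma cube_add_eq_zero_iff {x y : ι → Bool} : x + y = 0 ↔ x = y := by
  rw [add_eq_zero_iff_eq_neg, neg_eq_of_add_eq_zero_right (cube_add_self y)]

def boolSign (b : Bool) : ℝ := if b then -1 else 1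

lemma boolSign_add (a b : Bool) : boolSign (a + b) = boolSign a * boolSign b := by
  cases a <;> cases b <;> norm_num [boolSign, Bool.add_eq_xor]

lemma boolSign_eq_one_add (b : Bool) : boolSign b = 1 + -2 * if b = true then 1 else 0 := by
  cases b <;> norm_num [boolSign]

def walsh (S : Finset ι) (x : ι → Bool) : ℝ := ∏ i ∈ S, boolSign (x i)

lemma walsh_add (S : Finset ι) (x y : ι → Bool) : walsh S (x + y) = walsh S x * walsh S y := by
  simp only [walsh, Pi.add_apply, boolSign_add, prod_mul_distrib]

lemma walsh_empty (x : ι → Bool) : walsh ∅ x = 1 := prod_empty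

lemma walsh_single [DecidableEq ι] (S : Finset ι) (i : ι) :
    walsh S (Pi.single i true) = if i ∈ S then -1 else 1 := by
  simp only [walsh, Pi.single_apply]
  rw [← prod_ite_eq' S i fun _ => (-1 : ℝ)]
  exact prod_congr rfl fun j _ => by split_ifs <;> rfl

variable [Fintype ι]

lemma sum_walsh (z : ι → Bool) :
    ∑ S, walsh S z = if z = 0 then (2 : ℝ) ^ Fintype.card ι else 0 := by
  simp only [walsh, ← powerset_univ, ← prod_one_add]
  split_ifs with hz
  · simp [hz, boolSign, Bool.zero_eq_false, one_add_one_eq_two]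
  · obtain ⟨i, hi⟩ := Function.ne_iff.mp hz
    exact prod_eq_zero (mem_univ i) (by cases h : z i <;> simp_all [boolSign, Bool.zero_eq_false])

variable [DecidableEq ι]

def walshTransform (f : (ι → Bool) → ℝ) (S : Finset ι) : ℝ := ∑ x, f x * walsh S x

lemma walshTransform_empty (f : (ι → Bool) → ℝ) : walshTransform f ∅ = ∑ x, f x := by
  simp [walshTransform, walsh_empty]

lemma sum_walshTransform_mul (f g : (ι → Bool) → ℝ) :
    ∑ S, walshTransform f S * walshTransform g S = 2 ^ Fintype.card ι * ∑ x, f x * g x := by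
  calc ∑ S, walshTransform f S * walshTransform g S
      = ∑ x, ∑ y, f x * g y * ∑ S, walsh S (x + y) := by
        simp only [walshTransform, sum_mul_sum]
        simp only [walsh_add, mul_sum]
        rw [sum_comm]
        refine sum_congr rfl fun x _ => ?_
        rw [sum_comm]
        exact sum_congr rfl fun y _ => sum_congr rfl fun S _ => by ring
    _ = 2 ^ Fintype.card ι * ∑ x, f x * g x := by
        simp [sum_walsh, cube_add_eq_zero_iff, mul_sum, mul_comm]

/-- Since `-y = y` on the cube, this is the usual convolution. -/
def cubeConv (f g : (ι → Bool) → ℝ) (x : ι → Bool) : ℝ := ∑ y, f y * g (x + y)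

lemma cubeConv_zero (f g : (ι → Bool) → ℝ) : cubeConv f g 0 = ∑ x, f x * g x := by
  simp [cubeConv]

lemma sum_mul_walsh_add (g : (ι → Bool) → ℝ) (S : Finset ι) (y : ι → Bool) :
    ∑ x, g (x + y) * walsh S x = walsh S y * walshTransform g S := by
  rw [walshTransform, mul_sum, ← Equiv.sum_comp (Equiv.addRight y)]
  refine sum_congr rfl fun x _ => ?_
  rw [Equiv.coe_addRight, add_assoc, cube_add_self, add_zero, walsh_add]
  ring

lemma walshTransform_cubeConv (f g : (ι → Bool) → ℝ) (S : Finset ι) :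
    walshTransform (cubeConv f g) S = walshTransform f S * walshTransform g S := by
  simp only [walshTransform, cubeConv, sum_mul]
  rw [sum_comm]
  refine sum_congr rfl fun y _ => ?_
  simp only [mul_assoc]
  rw [← mul_sum, sum_mul_walsh_add, walshTransform]

lemma hammingNorm_eq_one_iff {u : ι → Bool} :
    hammingNorm u = 1 ↔ ∃ i, Pi.single i true = u := by
  simp only [hammingNorm, card_eq_one, Finset.ext_iff, funext_iff, mem_filter, mem_univ, true_and,
    mem_singleton]
  refine exists_congr fun i => forall_congr' fun j => ?_
  by_cases h : j = i <;> cases u j <;> simp [h, Bool.zero_eq_false]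

lemma sum_walsh_hammingNorm_eq_one (S : Finset ι) :
    ∑ u with hammingNorm u = 1, walsh S u = Fintype.card ι - 2 * #S := by
  have sphere :
      ({u | hammingNorm u = 1} : Finset (ι → Bool)) = univ.image (Pi.single · true) := by
    ext u
    simp [hammingNorm_eq_one_iff]
  have single_inj : Function.Injective (Pi.single · true : ι → ι → Bool) := fun i j h => by
    simpa [Pi.single_apply] using congrFun h i
  rw [sphere, sum_image fun i _ j _ h => single_inj h]
  simp only [walsh_single]
  have (i : ι) : (if i ∈ S then (-1 : ℝ) else 1) = 1 - 2 * if i ∈ S then 1 else 0 := by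
    split_ifs <;> norm_num
  simp only [this, sum_sub_distrib, ← mul_sum, sum_boole]
  simp

end BooleanCube

lemma sq_sum_le_card_mul_sum_sq_of_support_subset {α : Type*} [Fintype α] {f : α → ℝ}
    {s : Finset α} (hs : ∀ x, f x ≠ 0 → x ∈ s) : (∑ x, f x) ^ 2 ≤ #s * ∑ x, f x ^ 2 := by
  rw [← sum_subset (subset_univ s) fun x _ hx => not_not.1 (mt (hs x) hx)]
  calc (∑ x ∈ s, f x) ^ 2 ≤ #s * ∑ x ∈ s, f x ^ 2 := sq_sum_le_card_mul_sum_sq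
    _ ≤ #s * ∑ x, f x ^ 2 :=
      mul_le_mul_of_nonneg_left (sum_le_univ_sum_of_nonneg fun x => sq_nonneg _) (#s).cast_nonneg

lemma sum_sq_pos_of_sum_eq_one {α : Type*} [Fintype α] {p : α → ℝ} (hp1 : ∑ x, p x = 1) :
    0 < ∑ x, p x ^ 2 := by
  obtain ⟨x, -, hx⟩ := exists_ne_zero_of_sum_ne_zero (hp1 ▸ one_ne_zero)
  exact (by positivity : 0 < p x ^ 2).trans_le
    (single_le_sum (fun y _ => sq_nonneg (p y)) (mem_univ x))

lemma sum_mul_log_le_log_sum_sq {α : Type*} [Fintype α] {p : α → ℝ} (hp0 : ∀ x, 0 ≤ p x)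
    (hp1 : ∑ x, p x = 1) : ∑ x, p x * Real.log (p x) ≤ Real.log (∑ x, p x ^ 2) := by
  set W := ∑ x, p x ^ 2
  have hW : 0 < W := sum_sq_pos_of_sum_eq_one hp1
  -- Gibbs: `log t ≤ t - 1` at `t = p x / W`
  have term (x : α) : p x * Real.log (p x) - p x * Real.log W ≤ p x ^ 2 / W - p x := by
    rcases (hp0 x).eq_or_lt with h | h
    · simp [← h]
    · have := Real.log_le_sub_one_of_pos (div_pos h hW)
      rw [Real.log_div h.ne' hW.ne'] at this
      calc _ = p x * (Real.log (p x) - Real.log W) := by ring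
        _ ≤ p x * (p x / W - 1) := mul_le_mul_of_nonneg_left this h.le
        _ = _ := by ring
  have := sum_le_sum fun x (_ : x ∈ univ) => term x
  rw [sum_sub_distrib, sum_sub_distrib, ← sum_mul, hp1, ← sum_div, div_self hW.ne'] at this
  linarith

section HammingCube

variable {n : ℕ}

lemma adjOp_eq_sum_hammingNorm_eq_one (f : (Fin n → Bool) → ℝ) (x : Fin n → Bool) :
    adjOp f x = ∑ u with hammingNorm u = 1, f (x + u) := by
  rw [adjOp, sum_filter, sum_filter, ← Equiv.sum_comp (Equiv.addLeft x)]
  simp [hammingDist_eq_hammingNorm]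

lemma walshTransform_adjOp (f : (Fin n → Bool) → ℝ) (S : Finset (Fin n)) :
    walshTransform (adjOp f) S = (n - 2 * #S) * walshTransform f S := by
  simp only [walshTransform, adjOp_eq_sum_hammingNorm_eq_one, sum_mul]
  rw [sum_comm]
  simp only [sum_mul_walsh_add]
  rw [← sum_mul, sum_walsh_hammingNorm_eq_one, Fintype.card_fin, walshTransform]

lemma walshTransform_adjOp_sub_mul (f : (Fin n → Bool) → ℝ) (c : ℝ) (S : Finset (Fin n)) :
    walshTransform (fun x => adjOp f x - c * f x) S = (n - 2 * #S - c) * walshTransform f S := by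
  have linear : walshTransform (fun x => adjOp f x - c * f x) S =
      walshTransform (adjOp f) S - c * walshTransform f S := by
    simp only [walshTransform, sub_mul, sum_sub_distrib, mul_assoc, mul_sum]
  rw [linear, walshTransform_adjOp]
  ring

lemma adjOp_cubeConv (f g : (Fin n → Bool) → ℝ) :
    adjOp (cubeConv f g) = cubeConv f (adjOp g) := by
  funext x
  simp only [adjOp_eq_sum_hammingNorm_eq_one, cubeConv, mul_sum]
  rw [sum_comm]
  exact sum_congr rfl fun y _ => sum_congr rfl fun u _ => by rw [add_right_comm]

lemma mul_cubeConv_le_adjOp_cubeConv {f g : (Fin n → Bool) → ℝ} {c : ℝ} (hf : ∀ x, 0 ≤ f x)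
    (hg : ∀ x, c * g x ≤ adjOp g x) (x : Fin n → Bool) :
    c * cubeConv f g x ≤ adjOp (cubeConv f g) x := by
  rw [adjOp_cubeConv, cubeConv, cubeConv, mul_sum]
  exact sum_le_sum fun y _ => by nlinarith [hf y, hg (x + y)]

lemma walshTransform_eq_zero_of_kWiseIndep {k : ℕ} {p : (Fin n → Bool) → ℝ}
    (hp : KWiseIndep n k p) {S : Finset (Fin n)} (hS : S.Nonempty) (hSk : #S ≤ k) :
    walshTransform p S = 0 := by
  -- expanding `∏ (1 - 2·[x i])` turns `p̂(S)` into an alternating sum of marginals `2^(-|T|)`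
  have expand (x : Fin n → Bool) :
      walsh S x = ∑ T ∈ S.powerset, (-2) ^ #T * if ∀ i ∈ T, x i = true then 1 else 0 := by
    simp only [walsh, boolSign_eq_one_add, prod_one_add, prod_mul_distrib, prod_const, prod_boole]
    congr!
  calc walshTransform p S
      = ∑ T ∈ S.powerset, (-2) ^ #T * ∑ x with ∀ i ∈ T, x i = true, p x := by
        simp only [walshTransform, expand, mul_sum, sum_filter]
        rw [sum_comm]
        exact sum_congr rfl fun T _ => sum_congr rfl fun x _ => by split_ifs <;> ring
    _ = ∑ T ∈ S.powerset, (-1 : ℝ) ^ #T := by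
        refine sum_congr rfl fun T hT => ?_
        rw [hp T ((card_le_card (mem_powerset.1 hT)).trans hSk) fun _ => true, ← mul_pow]
        norm_num
    _ = 0 := by exact_mod_cast sum_powerset_neg_one_pow_card_of_nonempty hS

lemma card_filter_hWt_le (r : ℕ) :
    #{x : Fin n → Bool | hWt x ≤ r} ≤ ∑ i ∈ range (r + 1), n.choose i := by
  calc #{x : Fin n → Bool | hWt x ≤ r}
      ≤ #((range (r + 1)).biUnion fun i => powersetCard i (univ : Finset (Fin n))) := by
        refine card_le_card_of_injOn (fun x => ({i | x i = true} : Finset (Fin n))) (fun x hx => ?_)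
          fun x _ y _ h => funext fun i => ?_
        · simp only [coe_filter, Set.mem_ofPred_eq, mem_univ, true_and] at hx
          simpa [Nat.lt_succ_iff, hWt] using hx
        · simpa using congrArg (i ∈ ·) h
    _ ≤ ∑ i ∈ range (r + 1), #(powersetCard i (univ : Finset (Fin n))) := card_biUnion_le
    _ = ∑ i ∈ range (r + 1), n.choose i := by simp

lemma le_shannonEntropy_of_collision_le {p : (Fin n → Bool) → ℝ} (hp0 : ∀ x, 0 ≤ p x)
    (hp1 : ∑ x, p x = 1) {a b : ℝ} (hab : 2 ^ n * ∑ x, p x ^ 2 ≤ a * b) :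
    n - Real.logb 2 a - Real.logb 2 b ≤ shannonEntropy p := by
  have hW := sum_sq_pos_of_sum_eq_one hp1
  have hlog : ∑ x, p x * Real.logb 2 (p x) ≤ Real.logb 2 (∑ x, p x ^ 2) := by
    simp only [Real.logb, mul_div_assoc', ← sum_div]
    exact div_le_div_of_nonneg_right (sum_mul_log_le_log_sum_sq hp0 hp1)
      (Real.log_pos one_lt_two).le
  have hW' : 0 < 2 ^ n * ∑ x, p x ^ 2 := mul_pos (by positivity) hW
  have hab0 : 0 < a * b := hW'.trans_le hab
  have := Real.logb_le_logb_of_le one_lt_two hW' hab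
  rw [Real.logb_mul (by positivity) hW.ne', Real.logb_mul (left_ne_zero_of_mul hab0.ne')
    (right_ne_zero_of_mul hab0.ne'), Real.logb_pow, Real.logb_self_eq_one one_lt_two] at this
  rw [shannonEntropy]
  linarith

lemma sum_mul_walshTransform_sq_le {k : ℕ} {p : (Fin n → Bool) → ℝ} (hp1 : ∑ x, p x = 1)
    (hp : KWiseIndep n (k - 1) p) {a : Finset (Fin n) → ℝ} (ha : ∀ S, 0 ≤ a S) :
    ∑ S, (2 * k - 2 * #S) * a S * walshTransform p S ^ 2 ≤ 2 * k * a ∅ := by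
  rw [← add_sum_erase _ _ (mem_univ ∅), walshTransform_empty, hp1]
  have nonpos : ∀ S ∈ univ.erase ∅, (2 * k - 2 * #S) * a S * walshTransform p S ^ 2 ≤ 0 := by
    intro S hS
    have hS : S.Nonempty := nonempty_iff_ne_empty.2 (ne_of_mem_erase hS)
    by_cases hSk : #S < k
    · simp [walshTransform_eq_zero_of_kWiseIndep hp hS (by omega)]
    · have : (k : ℝ) ≤ #S := by exact_mod_cast not_lt.1 hSk
      exact mul_nonpos_of_nonpos_of_nonneg
        (mul_nonpos_of_nonpos_of_nonneg (by linarith) (ha S)) (sq_nonneg _)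
  simpa using sum_nonpos nonpos

theorem two_pow_mul_sum_sq_mul_sum_sq_le {k : ℕ} {d p : (Fin n → Bool) → ℝ}
    (hd0 : ∀ x, 0 ≤ d x) (hd : ∀ x, ((n : ℝ) - 2 * k + 1) * d x ≤ adjOp d x) (hp0 : ∀ x, 0 ≤ p x)
    (hp1 : ∑ x, p x = 1) (hp : KWiseIndep n (k - 1) p) :
    2 ^ n * ((∑ x, d x ^ 2) * ∑ x, p x ^ 2) ≤ 2 * k * (∑ x, d x) ^ 2 := by
  set e := cubeConv d d
  set w := cubeConv p p
  set G : (Fin n → Bool) → ℝ := fun z => adjOp e z - (n - 2 * k) * e z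
  have he : ∀ z, 0 ≤ e z := fun z => sum_nonneg fun y _ => mul_nonneg (hd0 y) (hd0 _)
  have hw : ∀ z, 0 ≤ w z := fun z => sum_nonneg fun y _ => mul_nonneg (hp0 y) (hp0 _)
  have e_le_G (z) : e z ≤ G z := by
    have := mul_cubeConv_le_adjOp_cubeConv hd0 hd z
    simp only [G]
    linarith
  have hG (S) : walshTransform G S = (2 * k - 2 * #S) * walshTransform d S ^ 2 := by
    rw [walshTransform_adjOp_sub_mul, walshTransform_cubeConv]
    ring
  calc 2 ^ n * ((∑ x, d x ^ 2) * ∑ x, p x ^ 2) = 2 ^ n * (e 0 * w 0) := by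
        simp only [e, w, cubeConv_zero, sq]
    _ ≤ 2 ^ n * ∑ z, G z * w z := by
        gcongr
        exact (mul_le_mul_of_nonneg_right (e_le_G 0) (hw 0)).trans
          (single_le_sum (fun z _ => mul_nonneg ((he z).trans (e_le_G z)) (hw z)) (mem_univ 0))
    _ = ∑ S, (2 * k - 2 * #S) * walshTransform d S ^ 2 * walshTransform p S ^ 2 := by
        have parseval := sum_walshTransform_mul G w
        rw [Fintype.card_fin] at parseval
        rw [← parseval]
        simp only [hG, w, walshTransform_cubeConv, sq]
    _ ≤ 2 * k * (∑ x, d x) ^ 2 := by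
        simpa [walshTransform_empty] using
          sum_mul_walshTransform_sq_le hp1 hp fun S => sq_nonneg (walshTransform d S)

end HammingCube

theorem entropy_from_eigenfunction_general (n k r : ℕ)
    (hkn : 2 * k ≤ n)
    (hd : ∃ d : (Fin n → Bool) → ℝ, (∀ x, 0 ≤ d x) ∧ (∑ x, d x) / 2 ^ n = 1 ∧
      (∀ x, d x ≠ 0 → hWt x ≤ r) ∧
      ∀ x, adjOp d x ≥ ((n : ℝ) - 2 * k + 1) * d x) :
    ∀ p : (Fin n → Bool) → ℝ, (∀ x, 0 ≤ p x) → (∑ x, p x = 1) →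
      KWiseIndep n (k - 1) p →
      shannonEntropy p ≥
        (n : ℝ) - Real.logb 2 n -
          Real.logb 2 ((∑ i ∈ Finset.range (r + 1), n.choose i : ℕ) : ℝ) := by
  obtain ⟨d, hd0, hd_mean, hd_supp, hd_eig⟩ := hd
  intro p hp0 hp1 hp
  set V : ℕ := ∑ i ∈ Finset.range (r + 1), n.choose i
  have hd_sum : ∑ x, d x = 2 ^ n := (div_eq_one_iff_eq (by positivity)).1 hd_mean
  have hball : (∑ x, d x) ^ 2 ≤ V * ∑ x, d x ^ 2 := by
    refine (sq_sum_le_card_mul_sum_sq_of_support_subset (s := {x | hWt x ≤ r}) ?_).trans ?_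
    · simpa using hd_supp
    · gcongr
      exact_mod_cast card_filter_hWt_le r
  have hd_sq : 0 < ∑ x, d x ^ 2 :=
    pos_of_mul_pos_right ((by rw [hd_sum]; positivity : (0 : ℝ) < _).trans_le hball) V.cast_nonneg
  have hcoll := two_pow_mul_sum_sq_mul_sum_sq_le hd0 hd_eig hp0 hp1 hp
  refine le_shannonEntropy_of_collision_le hp0 hp1 (le_of_mul_le_mul_right ?_ hd_sq)
  calc (2 ^ n * ∑ x, p x ^ 2) * ∑ x, d x ^ 2 ≤ 2 * k * (∑ x, d x) ^ 2 := by linarith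
    _ ≤ n * V * ∑ x, d x ^ 2 := by
      have : (2 * k : ℝ) ≤ n := by exact_mod_cast hkn
      nlinarith

/-- If there is a nonnegative `d` with `E[d] = 1`, supported on the Hamming ball of
radius `r` around `0`, with `Ad ≥ (n − 2k + 1)·d` pointwise, then every `(k−1)`-wise
independent random variable `X` on `{0,1}^n` has
`H(X) ≥ n − log₂ n − log₂(∑_{i ≤ r} C(n,i))`. -/
theorem entropy_from_eigenfunction (n k r : ℕ) (hn : 0 < n) (hk : 0 < k) (hr : 0 < r)
    (hkn : 2 * k ≤ n)
    (hd : ∃ d : (Fin n → Bool) → ℝ, (∀ x, 0 ≤ d x) ∧ (∑ x, d x) / 2 ^ n = 1 ∧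
      (∀ x, d x ≠ 0 → hWt x ≤ r) ∧
      ∀ x, adjOp d x ≥ ((n : ℝ) - 2 * k + 1) * d x) :
    ∀ p : (Fin n → Bool) → ℝ, (∀ x, 0 ≤ p x) → (∑ x, p x = 1) →
      KWiseIndep n (k - 1) p →
      shannonEntropy p ≥
        (n : ℝ) - Real.logb 2 n -
          Real.logb 2 ((∑ i ∈ Finset.range (r + 1), n.choose i : ℕ) : ℝ) :=
  entropy_from_eigenfunction_general n k r hkn hd
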